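/- arXiv:2105.04432 — 8 statements merged into one kernel-verified Lean document; each statement's English description precedes it below -/
import Mathlib

section
/- Let a, δ, ℓ be positive integers with ℓ ≤ δ, and let K be any field. Then for every integer r with 0 ≤ r ≤ δ − ℓ, the ℓ×ℓ submatrix P^a_{δ,ℓ}([r : r+ℓ−1], [0 : ℓ−1]) of P^a_{δ,ℓ}, formed by ℓ consecutive rows, is invertible over K. -/
set_option linter.unusedVariables false

/-- The recursively defined 0/1 matrix `P^a_{u,v}`, given entrywise:
`Pmat a u v i j` is the `(i,j)` entry of `P^a_{u,v}`. -/
def Pmat (a u v i j : ℕ) : ℕ :=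
  if h1 : 0 < u ∧ u + a < v then
    if j < u then (if i = j then 1 else 0)
    else if j < u + a then 0
    else Pmat a u (v - u - a) i (j - u - a)
  else if h2 : 0 < v ∧ v < u then
    if i < v then (if i = j then 1 else 0)
    else Pmat a (u - v) v (i - v) j
  else
    if i = j ∧ j < u then 1 else 0
termination_by u + v
decreasing_by
  · omega
  · omega

/-!
Row `x` of `P^a_{δ,ℓ}` agrees with the unit vector `e_{x mod ℓ}` on the columns `0, …, x mod ℓ`:
the first `min δ ℓ` rows start with an identity block, and when `ℓ < δ` the rows below it are
those of `P^a_{δ-ℓ,ℓ}`. Any `ℓ` consecutive rows have pairwise distinct residues mod `ℓ`, so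
sorting them by residue yields a unitriangular matrix.
-/

open Matrix

theorem Pmat_eq_ite_of_lt {a u v i j : ℕ} (hj : j ≤ i) (hiu : i < u) (hiv : i < v) :
    Pmat a u v i j = if i = j then 1 else 0 := by
  rw [Pmat]
  split_ifs <;> omega

theorem Pmat_of_lt_of_le {a u v i : ℕ} (j : ℕ) (hv : 0 < v) (hvu : v < u) (hi : v ≤ i) :
    Pmat a u v i j = Pmat a (u - v) v (i - v) j := by
  rw [Pmat, dif_neg (by omega), dif_pos ⟨hv, hvu⟩, if_neg (by omega)]

theorem Pmat_eq_ite_mod (a : ℕ) {ℓ : ℕ} (hℓ : 0 < ℓ) {δ x j : ℕ} (hx : x < δ) (hj : j ≤ x % ℓ) :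
    Pmat a δ ℓ x j = if x % ℓ = j then 1 else 0 := by
  induction x using Nat.strong_induction_on generalizing δ with
  | _ x ih =>
    by_cases hxℓ : x < ℓ
    · rw [Nat.mod_eq_of_lt hxℓ] at hj ⊢
      exact Pmat_eq_ite_of_lt hj hx hxℓ
    · have hmod : (x - ℓ) % ℓ = x % ℓ := (Nat.mod_eq_sub_mod (by omega)).symm
      rw [Pmat_of_lt_of_le j hℓ (by omega) (by omega), ← hmod]
      exact ih (x - ℓ) (by omega) (by omega) (hmod ▸ hj)

theorem Fin.add_val_sub_ofNat_mod {n : ℕ} [NeZero n] (r : ℕ) (i : Fin n) :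
    (r + (i - Fin.ofNat n r).val) % n = i.val := by
  have h := congrArg Fin.val (add_sub_cancel (Fin.ofNat n r) i)
  rwa [Fin.val_add, Fin.val_ofNat, Nat.mod_add_mod] at h

theorem Matrix.det_ne_zero_of_submatrix_unitriangular {n R : Type*} [Fintype n] [LinearOrder n]
    [CommRing R] [Nontrivial R] (M : Matrix n n R) (σ : Equiv.Perm n)
    (h : ∀ i j, j ≤ i → M (σ i) j = if i = j then 1 else 0) : M.det ≠ 0 := by
  have hU : (M.submatrix σ id).IsUpperTriangular := fun i j (hji : j < i) => by
    simpa [hji.ne'] using h i j hji.le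
  have hdet : (M.submatrix σ id).det = 1 := by
    rw [det_of_isUpperTriangular hU]
    exact Finset.prod_eq_one fun i _ => by simpa using h i i le_rfl
  intro h0
  rw [det_permute, h0, mul_zero] at hdet
  exact zero_ne_one hdet

theorem pmat_consecutive_rows_invertible_general {K : Type*} [Field K]
    (a δ ℓ : ℕ) (hℓ : 0 < ℓ)
    (r : ℕ) (hr : r + ℓ ≤ δ) :
    (Matrix.of fun i j : Fin ℓ => ((Pmat a δ ℓ (r + i.val) j.val : ℕ) : K)).det ≠ 0 := by
  have : NeZero ℓ := ⟨hℓ.ne'⟩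
  refine det_ne_zero_of_submatrix_unitriangular _ (Equiv.subRight (Fin.ofNat ℓ r)) fun i j hji => ?_
  have hmod := Fin.add_val_sub_ofNat_mod r i
  have hrow : r + (i - Fin.ofNat ℓ r).val < δ := by have := (i - Fin.ofNat ℓ r).isLt; omega
  rw [Equiv.subRight_apply, of_apply, Pmat_eq_ite_mod a hℓ hrow (hmod ▸ hji), hmod]
  simp [Fin.val_inj]

/-- for positive integers `a, δ, ℓ` with `ℓ ≤ δ` and any field `K`,
for every `r` with `0 ≤ r ≤ δ - ℓ`, the `ℓ×ℓ` submatrix of `P^a_{δ,ℓ}` formed by the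
`ℓ` consecutive rows `[r : r+ℓ-1]` (and all `ℓ` columns) is invertible over `K`. -/
theorem pmat_consecutive_rows_invertible {K : Type*} [Field K]
    (a δ ℓ : ℕ) (ha : 0 < a) (hδ : 0 < δ) (hℓ : 0 < ℓ) (hℓδ : ℓ ≤ δ)
    (r : ℕ) (hr : r + ℓ ≤ δ) :
    (Matrix.of fun i j : Fin ℓ => ((Pmat a δ ℓ (r + i.val) j.val : ℕ) : K)).det ≠ 0 :=
  pmat_consecutive_rows_invertible_general a δ ℓ hℓ r hr
end

section
/- (Property B1.) For every t ∈ [0:δ−1], there exists a vector w ∈ K^n lying in the K-linear span of the rows of H such that w_t ≠ 0 and w_i = 0 for every index i ∈ [t+1 : t+b−1] ∪ [τ+t+1 : τ+δ]. -/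
/-!
Only the top rows `0, …, t` of `H` are used: `w = ∑_{k ≤ t} x_k H_k` with `x_t = 1`. Column `t`
of `w` is then `α`, nonzero because `α ∉ F`, and the rest of the `α I_δ` block vanishes in the
forbidden columns since `k ≤ t`. The entries `H(0,τ) = α` and `H(k,τ+k) = 1` of these rows that
lie in forbidden columns have `k + (τ - b) < t`, so they disappear once `x` is supported on
`[t - (τ - b) : t]`. The whole content is thus a combination of rows of `P^a_{δ,τ-b}` with this
support that clears the columns `s < t`, which the recursive structure of `P` provides.
-/

set_option linter.unusedVariables false

/-- The parity-check matrix `H` of Construction 1, given entrywise (with `δ = b - a`):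
`α·I_δ` in the top-left `δ×δ` corner, `P^a_{δ,τ-b}` in columns `[b:τ-1]` of the top `δ` rows,
`H(0,τ) = α`, `H(j,τ+j) = 1` for `j ∈ [1:δ]`, `I_a` in columns `[0:a-1]` of the bottom `a` rows,
and `C` in columns `[a:τ]` of the bottom `a` rows; all other entries are `0`. -/
def Hmat {K : Type*} [Field K] (a b τ : ℕ) (α : K) (C : ℕ → ℕ → K) (i j : ℕ) : K :=
  if i < b - a then
    if j < b - a then (if i = j then α else 0)
    else if b ≤ j ∧ j < τ then (Pmat a (b - a) (τ - b) i (j - b) : K)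
    else if j = τ then (if i = 0 then α else 0)
    else if τ + 1 ≤ j ∧ j ≤ τ + (b - a) then (if j = τ + i then 1 else 0)
    else 0
  else
    if j < a then (if i = (b - a) + j then 1 else 0)
    else if j ≤ τ then C (i - (b - a)) (j - a)
    else if j = τ + (b - a) then (if i = b - a then 1 else 0)
    else 0

/-- Every square submatrix of the `m × n` matrix `C` (given entrywise) is invertible. -/
def allMinorsInvertible {K : Type*} [Field K] (C : ℕ → ℕ → K) (m n : ℕ) : Prop :=
  ∀ (k : ℕ) (I J : Fin k → ℕ), Function.Injective I → Function.Injective J →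
    (∀ i, I i < m) → (∀ j, J j < n) →
    (Matrix.of fun i j : Fin k => C (I i) (J j)).det ≠ 0

section Pmat

variable (a : ℕ) {u v : ℕ}

lemma Pmat_of_lt_of_stack (hv : 0 < v) (hvu : v < u) {i : ℕ} (hi : i < v) (j : ℕ) :
    Pmat a u v i j = if i = j then 1 else 0 := by
  rw [Pmat.eq_def, dif_neg (by omega), dif_pos ⟨hv, hvu⟩, if_pos hi]

lemma Pmat_add_of_stack (hv : 0 < v) (hvu : v < u) (i j : ℕ) :
    Pmat a u v (v + i) j = Pmat a (u - v) v i j := by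
  rw [Pmat.eq_def, dif_neg (by omega), dif_pos ⟨hv, hvu⟩, if_neg (by omega), Nat.add_sub_cancel_left]

lemma Pmat_eq_zero_of_lt {t s : ℕ} (ht : t < u) (hs : s < t)
    (h : ¬ (0 < v ∧ v < u ∧ v ≤ t)) : Pmat a u v t s = 0 := by
  rw [Pmat.eq_def]
  split_ifs <;> omega

/-- In the stacked case `P^a_{u,v} = [I_v; P^a_{u-v,v}]`, a combination for row `t - v` of the
lower block is shifted down and its entries in the first `v` columns are cancelled by rows of
`I_v`; in every other case row `t` already vanishes left of the diagonal. -/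
theorem exists_Pmat_row_combination {K : Type*} [Field K] (t : ℕ) (ht : t < u) :
    ∃ x : ℕ → K, x t = 1 ∧ (∀ i, i + v < t → x i = 0) ∧
      ∀ s, s < t → s < v → ∑ i ∈ Finset.range (t + 1), x i * (Pmat a u v i s : K) = 0 := by
  induction u using Nat.strong_induction_on generalizing t with
  | _ u ih =>
  by_cases hstack : 0 < v ∧ v < u ∧ v ≤ t
  · obtain ⟨hv, hvu, hvt⟩ := hstack
    obtain ⟨r, rfl⟩ : ∃ r, t = v + r := ⟨t - v, by omega⟩
    obtain ⟨y, hyr, hysupp, hysum⟩ := ih (u - v) (by omega) r (by omega)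
    let x : ℕ → K := fun i => if i < v then
      -∑ j ∈ Finset.range (r + 1), y j * (Pmat a (u - v) v j i : K) else y (i - v)
    refine ⟨x, by simpa [x] using hyr, fun i hi => ?_, fun s _ hsv => ?_⟩
    · by_cases hiv : i < v
      · simp [x, hiv, hysum i (by omega) hiv]
      · simpa [x, hiv] using hysupp (i - v) (by omega)
    · have hupper : ∀ j, x (v + j) * (Pmat a u v (v + j) s : K) =
          y j * (Pmat a (u - v) v j s : K) := fun j => by
        simp [x, Pmat_add_of_stack a hv hvu]
      have hlower : ∑ i ∈ Finset.range v, x i * (Pmat a u v i s : K) = x s := by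
        rw [Finset.sum_eq_single s (fun i hi his => by
          simp [Pmat_of_lt_of_stack a hv hvu (Finset.mem_range.1 hi), his]) (by simp [hsv])]
        simp [Pmat_of_lt_of_stack a hv hvu hsv]
      rw [add_assoc, Finset.sum_range_add, hlower, Finset.sum_congr rfl fun j _ => hupper j]
      simp [x, hsv]
  · refine ⟨Pi.single t 1, by simp, fun i hi => by simp [show i ≠ t by omega],
      fun s hst _ => ?_⟩
    rw [Finset.sum_eq_single t (fun i _ hit => by simp [hit]) (by simp)]
    simp [Pmat_eq_zero_of_lt a ht hst hstack]

end Pmat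

lemma Hmat_of_lt_of_lt {K : Type*} [Field K] {a b τ k c : ℕ} (α : K) (C : ℕ → ℕ → K)
    (hk : k < b - a) (hc : c < b - a) : Hmat a b τ α C k c = if k = c then α else 0 := by
  simp [Hmat, hk, hc]

lemma Hmat_of_mem_Pmat_block {K : Type*} [Field K] {a b τ k c : ℕ} (α : K) (C : ℕ → ℕ → K)
    (hk : k < b - a) (hbc : b ≤ c) (hcτ : c < τ) :
    Hmat a b τ α C k c = Pmat a (b - a) (τ - b) k (c - b) := by
  simp [Hmat, hk, hbc, hcτ, show ¬ c < b - a by omega]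

lemma mul_Hmat_eq_zero {K : Type*} [Field K] {a b τ k c t : ℕ} (hbτ : b ≤ τ)
    (α : K) (C : ℕ → ℕ → K) {x : K}
    (hkt : k ≤ t) (ht : t < b - a) (hx : k + (τ - b) < t → x = 0)
    (hc : (t + 1 ≤ c ∧ c ≤ t + b - 1) ∨ (τ + t + 1 ≤ c ∧ c ≤ τ + (b - a)))
    (hP : ¬ (b ≤ c ∧ c < τ)) : x * Hmat a b τ α C k c = 0 := by
  rw [Hmat, if_pos (by omega)]
  split_ifs <;> simp <;> first | omega | simp [hx (by omega)]

/-- Property B1: for every `t ∈ [0:δ-1]` there is a vector `w ∈ K^n` in the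
`K`-linear span of the rows of `H` with `w t ≠ 0` and `w i = 0` for all
`i ∈ [t+1 : t+b-1] ∪ [τ+t+1 : τ+δ]`. -/
theorem property_B1 {K : Type*} [Field K] (F : Subfield K) (a b τ : ℕ)
    (hbτ : b ≤ τ)
    (α : K) (hα : α ∉ F)
    (C : ℕ → ℕ → K)
    (t : ℕ) (ht : t < b - a) :
    ∃ w : Fin (τ + 1 + (b - a)) → K,
      w ∈ Submodule.span K
        (Set.range fun i : Fin b => fun j : Fin (τ + 1 + (b - a)) => Hmat a b τ α C i.val j.val) ∧
      w ⟨t, by omega⟩ ≠ 0 ∧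
      ∀ i : Fin (τ + 1 + (b - a)),
        ((t + 1 ≤ i.val ∧ i.val ≤ t + b - 1) ∨ (τ + t + 1 ≤ i.val ∧ i.val ≤ τ + (b - a))) →
        w i = 0 := by
  obtain ⟨x, hxt, hxsupp, hxsum⟩ := exists_Pmat_row_combination (K := K) a (v := τ - b) t ht
  let row : Fin b → Fin (τ + 1 + (b - a)) → K := fun i j => Hmat a b τ α C i.val j.val
  set w := ∑ k : Fin (t + 1), x k • row (Fin.castLE (by omega) k) with hw_def
  have hw : ∀ j, w j = ∑ k ∈ Finset.range (t + 1), x k * Hmat a b τ α C k j := fun j => by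
    simp [hw_def, row, Finset.sum_apply,
      Fin.sum_univ_eq_sum_range (fun k => x k * Hmat a b τ α C k j)]
  refine ⟨w, Submodule.sum_mem _ fun k _ => Submodule.smul_mem _ _ (Submodule.subset_span ⟨_, rfl⟩),
    ?_, fun c hc => ?_⟩
  · have hα0 : α ≠ 0 := fun h => hα (h ▸ F.zero_mem)
    rw [hw, Finset.sum_eq_single t (fun k hk hkt => by
      rw [Hmat_of_lt_of_lt α C (by simp at hk; omega) ht, if_neg hkt, mul_zero]) (by simp)]
    rwa [Hmat_of_lt_of_lt α C ht ht, if_pos rfl, hxt, one_mul]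
  · rw [hw]
    by_cases hP : b ≤ c.val ∧ c.val < τ
    · rw [← hxsum (c - b) (by omega) (by omega)]
      exact Finset.sum_congr rfl fun k hk => by
        rw [Hmat_of_mem_Pmat_block α C (by simp at hk; omega) hP.1 hP.2]
    · exact Finset.sum_eq_zero fun k hk => mul_Hmat_eq_zero hbτ α C (by simp at hk; omega) ht
        (hxsupp k) hc hP
end

section
/- Suppose t ∈ [0:δ−1] and at least one of the following holds: (i) τ − b ≥ δ, (ii) t ≤ τ − b − 1, or (iii) b = τ. Then row t of H itself provides the required parity check for a burst starting at t: H(t,t) = α, and H(t,i) = 0 for every i ∈ [t+1 : t+b−1] ∪ [τ+t+1 : τ+δ]. -/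
set_option linter.unusedVariables false

/- When `v < u`, rows `i ≥ v` come from the stacked copy `P^a_{u-v,v}`, whose ones may lie
left of the diagonal; `hiv` keeps row `i` out of it. -/
theorem Pmat_eq_zero_of_lt_s2 {a u v i j : ℕ} (hji : j < i) (hiu : i < u) (hiv : i < v ∨ u ≤ v) :
    Pmat a u v i j = 0 := by
  rw [Pmat]
  split_ifs <;> omega

section Hmat

variable {K : Type*} [Field K] {a b τ : ℕ} (α : K) (C : ℕ → ℕ → K) {t : ℕ}

theorem Hmat_self_of_lt (ht : t < b - a) : Hmat a b τ α C t t = α := by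
  simp [Hmat, ht]

theorem Hmat_eq_zero_of_lt_of_lt_add (hbτ : b ≤ τ) (ht : t < b - a)
    (hcase : (b - a) + b ≤ τ ∨ t + b + 1 ≤ τ ∨ b = τ) {i : ℕ} (hti : t < i) (hib : i < t + b) :
    Hmat a b τ α C t i = 0 := by
  -- only the block `P^a_{δ,τ-b}` meets the window, and there column `i - b` lies left of row `t`
  unfold Hmat
  split_ifs <;> first
    | rfl
    | omega
    | rw [Pmat_eq_zero_of_lt_s2 (a := a) (v := τ - b) (j := i - b) (by omega) ht (by omega), Nat.cast_zero]

theorem Hmat_eq_zero_of_add_lt (ht : t < b - a) {i : ℕ} (hi : τ + t < i) :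
    Hmat a b τ α C t i = 0 := by
  unfold Hmat
  split_ifs <;> first | rfl | omega

end Hmat

theorem property_B1_single_row_general {K : Type*} [Field K] (a b τ : ℕ)
    (hbτ : b ≤ τ)
    (α : K)
    (C : ℕ → ℕ → K)
    (t : ℕ) (ht : t < b - a)
    (hcase : (b - a) + b ≤ τ ∨ t + b + 1 ≤ τ ∨ b = τ) :
    Hmat a b τ α C t t = α ∧
    ∀ i : ℕ, ((t + 1 ≤ i ∧ i ≤ t + b - 1) ∨ (τ + t + 1 ≤ i ∧ i ≤ τ + (b - a))) →
      Hmat a b τ α C t i = 0 := by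
  refine ⟨Hmat_self_of_lt α C ht, ?_⟩
  rintro i (⟨hti, hib⟩ | ⟨hτi, -⟩)
  · exact Hmat_eq_zero_of_lt_of_lt_add α C hbτ ht hcase hti (by omega)
  · exact Hmat_eq_zero_of_add_lt α C ht hτi

/-- if `t ∈ [0:δ-1]` and (i) `τ - b ≥ δ`, or (ii) `t ≤ τ - b - 1`, or
(iii) `b = τ`, then row `t` of `H` itself is the required parity check:
`H(t,t) = α` and `H(t,i) = 0` for all `i ∈ [t+1 : t+b-1] ∪ [τ+t+1 : τ+δ]`. -/
theorem property_B1_single_row {K : Type*} [Field K] (F : Subfield K) (a b τ : ℕ)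
    (ha : 0 < a) (hab : a < b) (hbτ : b ≤ τ)
    (α : K) (hα : α ∉ F)
    (C : ℕ → ℕ → K) (hCF : ∀ i j, i < a → j < τ + 1 - a → C i j ∈ F)
    (hC : allMinorsInvertible C a (τ + 1 - a))
    (t : ℕ) (ht : t < b - a)
    (hcase : (b - a) + b ≤ τ ∨ t + b + 1 ≤ τ ∨ b = τ) :
    Hmat a b τ α C t t = α ∧
    ∀ i : ℕ, ((t + 1 ≤ i ∧ i ≤ t + b - 1) ∨ (τ + t + 1 ≤ i ∧ i ≤ τ + (b - a))) →
      Hmat a b τ α C t i = 0 :=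
  property_B1_single_row_general a b τ hbτ α C t ht hcase
end

section
/- (Property R1.) For every t ∈ [0:δ−1] and every set A ⊆ [t+1 : τ+t] of column indices with |A| = a−1, column t of H (a vector in K^b) does not lie in the K-linear span of the columns of H indexed by A. -/
set_option linter.unusedVariables false

/-!
Only the last `a` rows of `H` matter. There, columns `0, …, τ` of `H` are the columns of
`[I_a | C]`, and any `a` of those are linearly independent because every square submatrix of `C`
is invertible; columns `τ + 1, …, τ + t` vanish. Column `t` and the columns of `A` up to `τ` are at
most `a` distinct columns of `[I_a | C]`, so even after projecting to the last `a` rows column `t`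
is not in the span of the columns of `A`.
-/

open Finset

section

variable {K : Type*} [Field K]

theorem allMinorsInvertible.eq_zero_of_forall_sum_eq_zero {C : ℕ → ℕ → K} {m n : ℕ}
    (hC : allMinorsInvertible C m n) {R J : Finset ℕ} (hR : ∀ r ∈ R, r < m)
    (hJ : ∀ j ∈ J, j < n) (hcard : #J ≤ #R) {x : ℕ → K}
    (hx : ∀ r ∈ R, ∑ j ∈ J, C r j * x j = 0) : ∀ j ∈ J, x j = 0 := by
  obtain ⟨R', hR'R, hR'card⟩ := exists_subset_card_eq hcard
  generalize hk : #J = k at hR'card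
  let eR := R'.orderEmbOfFin hR'card
  let eJ := J.orderEmbOfFin hk
  have heR : ∀ i, eR i ∈ R := fun i => hR'R (R'.orderEmbOfFin_mem hR'card i)
  have hdet := hC k (eR ·) (eJ ·) eR.injective eJ.injective (fun i => hR _ (heR i))
    (fun j => hJ _ (J.orderEmbOfFin_mem hk j))
  have hker : (Matrix.of fun i j : Fin k => C (eR i) (eJ j)).mulVec (x ∘ eJ) = 0 := by
    funext i
    rw [Pi.zero_apply, ← hx _ (heR i), ← J.map_orderEmbOfFin_univ hk, sum_map]
    rfl
  intro j hj
  obtain ⟨i, rfl⟩ : j ∈ Set.range eJ := by rwa [J.range_orderEmbOfFin hk]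
  exact congrFun (Matrix.eq_zero_of_mulVec_eq_zero hdet hker) i

/-- Column `j` of the matrix `[I_a | C]`. -/
def idJoinCol (a : ℕ) (C : ℕ → ℕ → K) (j : ℕ) (r : Fin a) : K :=
  if j < a then (if (r : ℕ) = j then 1 else 0) else C r (j - a)

theorem sum_smul_idJoinCol_apply (a : ℕ) (C : ℕ → ℕ → K) (S : Finset ℕ) (d : ℕ → K)
    (r : Fin a) :
    (∑ j ∈ S, d j • idJoinCol a C j) r
      = (if (r : ℕ) ∈ S then d r else 0) + ∑ j ∈ S with a ≤ j, C r (j - a) * d j := by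
  rw [Finset.sum_apply, ← sum_filter_add_sum_filter_not S (· < a)]
  congr 1
  · have hdiag : ∀ j ∈ S.filter (· < a),
        (d j • idJoinCol a C j) r = if (r : ℕ) = j then d j else 0 := by
      intro j hj
      simp [idJoinCol, (mem_filter.1 hj).2]
    rw [sum_congr rfl hdiag, sum_ite_eq]
    simp [r.isLt]
  · refine sum_congr (filter_congr fun j _ => not_lt) fun j hj => ?_
    simp [idJoinCol, (mem_filter.1 hj).2, mul_comm]

/-- The rows `r < a` with `r ∉ S` see only the `C`-block of the columns `j ∈ S` with `a ≤ j`,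
and there are at least as many such rows as such columns. -/
theorem eq_zero_of_sum_smul_idJoinCol_eq_zero_of_le {a n : ℕ} {C : ℕ → ℕ → K}
    (hC : allMinorsInvertible C a n) {S : Finset ℕ} (hS : ∀ j ∈ S, j < a + n) (hcard : #S ≤ a)
    {d : ℕ → K} (hd : ∑ j ∈ S, d j • idJoinCol a C j = 0) {j : ℕ} (hj : j ∈ S) (haj : a ≤ j) :
    d j = 0 := by
  set T := S.filter (a ≤ ·)
  have hinj : Set.InjOn (· - a) (T : Set ℕ) := fun i hi j hj h => by
    simp only [coe_filter, Set.mem_ofPred_eq, T] at hi hj h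
    omega
  have hR : ∀ r ∈ range a \ S, r < a := fun r hr => mem_range.1 (mem_sdiff.1 hr).1
  have hJ : ∀ i ∈ T.image (· - a), i < n := by
    simp only [mem_image, mem_filter, T]
    rintro _ ⟨j, ⟨hj, haj⟩, rfl⟩
    have := hS j hj
    omega
  have hcardJ : #(T.image (· - a)) ≤ #(range a \ S) := by
    have h1 : #T + #(S.filter (¬ a ≤ ·)) = #S := card_filter_add_card_filter_not _
    have h2 := card_sdiff_add_card_inter (range a) S
    have h3 : range a ∩ S = S.filter (¬ a ≤ ·) := by ext; simp [and_comm]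
    rw [card_range, h3] at h2
    rw [card_image_of_injOn hinj]
    omega
  have hx : ∀ r ∈ range a \ S, ∑ i ∈ T.image (· - a), C r i * d (i + a) = 0 := by
    intro r hr
    rw [mem_sdiff, mem_range] at hr
    have hrow := congrFun hd ⟨r, hr.1⟩
    rw [sum_smul_idJoinCol_apply, if_neg hr.2, zero_add, Pi.zero_apply] at hrow
    rw [sum_image hinj, ← hrow]
    refine sum_congr rfl fun j hj => ?_
    rw [Nat.sub_add_cancel (mem_filter.1 hj).2]
  have := hC.eq_zero_of_forall_sum_eq_zero hR hJ hcardJ hx (j - a)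
    (mem_image_of_mem _ (mem_filter.2 ⟨hj, haj⟩))
  rwa [Nat.sub_add_cancel haj] at this

theorem linearIndepOn_idJoinCol {a n : ℕ} {C : ℕ → ℕ → K} (hC : allMinorsInvertible C a n)
    {S : Finset ℕ} (hS : ∀ j ∈ S, j < a + n) (hcard : #S ≤ a) :
    LinearIndepOn K (idJoinCol a C) (S : Set ℕ) := by
  rw [linearIndepOn_finset_iff]
  intro d hd j hj
  by_cases haj : a ≤ j
  · exact eq_zero_of_sum_smul_idJoinCol_eq_zero_of_le hC hS hcard hd hj haj
  have hrow := congrFun hd ⟨j, by omega⟩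
  have hCblock : ∑ i ∈ S with a ≤ i, C j (i - a) * d i = 0 := sum_eq_zero fun i hi => by
    rw [eq_zero_of_sum_smul_idJoinCol_eq_zero_of_le hC hS hcard hd (mem_filter.1 hi).1
      (mem_filter.1 hi).2, mul_zero]
  rwa [sum_smul_idJoinCol_apply, if_pos hj, hCblock, add_zero, Pi.zero_apply] at hrow

def bottomRows {a b : ℕ} (hab : a ≤ b) : (Fin b → K) →ₗ[K] (Fin a → K) :=
  LinearMap.funLeft K K fun r => ⟨b - a + r, by omega⟩

section Hmat

variable {a b τ : ℕ} (hab : a ≤ b) (α : K) (C : ℕ → ℕ → K)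

theorem bottomRows_Hmat_of_le {j : ℕ} (hj : j ≤ τ) :
    bottomRows hab (fun i : Fin b => Hmat a b τ α C i j) = idJoinCol a C j := by
  ext r
  simp only [bottomRows, LinearMap.funLeft_apply, idJoinCol, Hmat,
    if_neg (by omega : ¬ b - a + (r : ℕ) < b - a), if_pos hj, Nat.add_sub_cancel_left,
    add_right_inj]

theorem bottomRows_Hmat_eq_zero {j : ℕ} (haj : a ≤ j) (hτj : τ < j) (hj : j < τ + (b - a)) :
    bottomRows hab (fun i : Fin b => Hmat a b τ α C i j) = 0 := by
  ext r
  simp only [bottomRows, LinearMap.funLeft_apply, Hmat, Pi.zero_apply,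
    if_neg (by omega : ¬ b - a + (r : ℕ) < b - a), if_neg (by omega : ¬ j < a),
    if_neg (by omega : ¬ j ≤ τ), if_neg (by omega : ¬ j = τ + (b - a))]

end Hmat

end

theorem property_R1_general {K : Type*} [Field K] (a b τ : ℕ)
    (ha : 0 < a) (hab : a < b) (hbτ : b ≤ τ)
    (α : K)
    (C : ℕ → ℕ → K)
    (hC : allMinorsInvertible C a (τ + 1 - a))
    (t : ℕ) (ht : t < b - a)
    (A : Finset ℕ) (hA : ∀ j ∈ A, t + 1 ≤ j ∧ j ≤ τ + t) (hcard : A.card = a - 1) :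
    (fun i : Fin b => Hmat a b τ α C i.val t) ∉
      Submodule.span K ((fun j : ℕ => fun i : Fin b => Hmat a b τ α C i.val j) '' ↑A) := by
  intro hmem
  set A' := A.filter (· ≤ τ)
  have htA' : t ∉ (A' : Set ℕ) := fun h => by
    have := (hA t (mem_filter.1 h).1).1
    omega
  have hindep : LinearIndepOn K (idJoinCol a C) (insert t A' : Set ℕ) := by
    rw [← coe_insert]
    refine linearIndepOn_idJoinCol hC (fun j hj => ?_) ?_
    · rcases mem_insert.1 hj with rfl | hj
      · omega
      · have := (mem_filter.1 hj).2
        omega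
    · calc #(insert t A') ≤ #A' + 1 := card_insert_le _ _
        _ ≤ #A + 1 := by grw [card_filter_le]
        _ = a := by omega
  refine ((linearIndepOn_insert htA').1 hindep).2 ?_
  have hproj := Submodule.mem_map_of_mem (f := bottomRows hab.le) hmem
  rw [Submodule.map_span, ← Set.image_comp, bottomRows_Hmat_of_le hab.le α C (by omega)] at hproj
  refine Submodule.span_le.2 ?_ hproj
  rintro _ ⟨j, hj, rfl⟩
  by_cases hjτ : j ≤ τ
  · exact Submodule.subset_span
      ⟨j, mem_filter.2 ⟨hj, hjτ⟩, (bottomRows_Hmat_of_le hab.le α C hjτ).symm⟩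
  · have := (hA j hj).2
    rw [Function.comp_apply, bottomRows_Hmat_eq_zero hab.le α C (by omega) (by omega) (by omega)]
    exact zero_mem _

/-- Property R1: for every `t ∈ [0:δ-1]` and every set `A ⊆ [t+1 : τ+t]` of
column indices with `|A| = a - 1`, column `t` of `H` does not lie in the `K`-linear span of
the columns of `H` indexed by `A`. -/
theorem property_R1 {K : Type*} [Field K] (F : Subfield K) (a b τ : ℕ)
    (ha : 0 < a) (hab : a < b) (hbτ : b ≤ τ)
    (α : K) (hα : α ∉ F)
    (C : ℕ → ℕ → K) (hCF : ∀ i j, i < a → j < τ + 1 - a → C i j ∈ F)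
    (hC : allMinorsInvertible C a (τ + 1 - a))
    (t : ℕ) (ht : t < b - a)
    (A : Finset ℕ) (hA : ∀ j ∈ A, t + 1 ≤ j ∧ j ≤ τ + t) (hcard : A.card = a - 1) :
    (fun i : Fin b => Hmat a b τ α C i.val t) ∉
      Submodule.span K ((fun j : ℕ => fun i : Fin b => Hmat a b τ α C i.val j) '' ↑A) :=
  property_R1_general a b τ ha hab hbτ α C hC t ht A hA hcard
end

section
/- Write τ = v·b + ℓ with 0 ≤ ℓ < b (so v ≥ 1). Suppose t satisfies δ ≤ t ≤ (v−1)b, and write t = x·b + θ with 0 ≤ θ < b. If θ ≤ δ−1, then det(H([0:b−1],[t : t+b−1])) = ε · det(H([δ:b−1],[xb+δ : (x+1)b−1])) for some ε ∈ {1, −1}; in particular, H([0:b−1],[t : t+b−1]) is invertible over K. -/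
set_option linter.unusedVariables false

/-! The top `δ` rows of `H` between column `b` and `τ` come from `P^a_{δ,τ-b}`, which repeats
`[I_δ | 0_{δ×a}]` with period `b = δ + a`: on top, a column with residue `k < δ` mod `b` is the
`k`-th unit vector and a column with residue in `[δ, b)` is zero. As `θ < δ`, the zero-topped
columns of the window `[t, t+b)` are exactly `xb+δ, …, (x+1)b-1`. Permuting the window cyclically
by residue gives the block form `[[I_δ, 0], [*, D]]`, so the determinant is `±det D`, and `D` is a
square submatrix of `C`. -/

theorem Matrix.exists_det_eq_pm_mul_det_submatrix {m n R : Type*} [Fintype m] [DecidableEq m]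
    [Fintype n] [DecidableEq n] [CommRing R] (M : Matrix n n R) (e f : m ≃ n) :
    ∃ ε : R, (ε = 1 ∨ ε = -1) ∧ M.det = ε * (M.submatrix e f).det := by
  set s := Equiv.Perm.sign (e.symm.trans f)
  have hsub : (M.submatrix e f).det = s * M.det := by
    rw [← Matrix.det_permute', ← Matrix.det_submatrix_equiv_self e]
    congr 1
    ext i j
    simp
  refine ⟨s, ?_, ?_⟩
  · rcases Int.units_eq_one_or s with h | h <;> simp [h]
  · rw [hsub, ← mul_assoc, ← Int.cast_mul, ← Units.val_mul, Int.units_mul_self]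
    simp

theorem Matrix.det_eq_det_toBlocks₂₂ {m n R : Type*} [Fintype m]
    [DecidableEq m] [Fintype n] [DecidableEq n] [CommRing R] (N : Matrix (m ⊕ n) (m ⊕ n) R)
    (h₁₁ : N.toBlocks₁₁ = 1) (h₁₂ : N.toBlocks₁₂ = 0) : N.det = N.toBlocks₂₂.det := by
  rw [← Matrix.fromBlocks_toBlocks N, h₁₁, h₁₂, Matrix.det_fromBlocks_zero₁₂, Matrix.det_one,
    one_mul, Matrix.toBlocks_fromBlocks₂₂]

lemma Pmat_mul_add {a d : ℕ} (hd : 0 < d) (q W i r : ℕ) (hr : r < d + a)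
    (hW : q * (d + a) + d ≤ W) :
    Pmat a d W i (q * (d + a) + r) = if i = r ∧ r < d then 1 else 0 := by
  induction q generalizing W with
  | zero =>
    rw [Nat.zero_mul, Nat.zero_add] at hW ⊢
    unfold Pmat
    by_cases hW' : 0 < d ∧ d + a < W
    · rw [dif_pos hW']
      by_cases hrd : r < d
      · simp [hrd]
      · simp [hrd, hr]
    · rw [dif_neg hW', dif_neg (by omega)]
  | succ q ih =>
    rw [Nat.succ_mul] at hW ⊢
    rw [Pmat, dif_pos ⟨hd, by omega⟩, if_neg (by omega), if_neg (by omega),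
      show q * (d + a) + (d + a) + r - d - a = q * (d + a) + r by omega]
    exact ih (W - d - a) (by omega)

section Hmat

variable {K : Type*} [Field K] {a b τ : ℕ} {α : K} {C : ℕ → ℕ → K}

lemma Hmat_of_lt_of_le {i j : ℕ} (hi : i < b - a) (hbj : b ≤ j) (hjτ : j < τ) :
    Hmat a b τ α C i j = (Pmat a (b - a) (τ - b) i (j - b) : K) := by
  rw [Hmat, if_pos hi, if_neg (by omega), if_pos ⟨hbj, hjτ⟩]

lemma Hmat_of_le_of_le {i j : ℕ} (hi : b - a ≤ i) (haj : a ≤ j) (hjτ : j ≤ τ) :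
    Hmat a b τ α C i j = C (i - (b - a)) (j - a) := by
  rw [Hmat, if_neg (by omega), if_neg (by omega), if_pos hjτ]

/-- `c < τ / b * b` says that the whole period of length `b` containing `c` ends before `τ`. -/
lemma Hmat_eq_ite_mod {i c : ℕ} (hi : i < b - a) (hbc : b ≤ c) (hcτ : c < τ / b * b) :
    Hmat a b τ α C i c = if i = c % b then 1 else 0 := by
  have hb : 0 < b := by omega
  have hq : c / b < τ / b := (Nat.div_lt_iff_lt_mul hb).2 hcτ
  obtain ⟨q, hq'⟩ : ∃ q, c / b = q + 1 := ⟨c / b - 1, by have := Nat.div_pos hbc hb; omega⟩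
  have hc : c = q * b + b + c % b := by
    have := Nat.div_add_mod' c b
    rw [hq', Nat.succ_mul] at this
    omega
  have hτ : q * b + b + b ≤ τ := by
    have h1 : (q + 1 + 1) * b ≤ τ / b * b := Nat.mul_le_mul_right b (by omega)
    have h2 := Nat.div_mul_le_self τ b
    rw [Nat.succ_mul, Nat.succ_mul] at h1
    omega
  have hab : b - a + a = b := by omega
  have hcb : c - b = q * (b - a + a) + c % b := by rw [hab]; omega
  rw [Hmat_of_lt_of_le hi hbc (by have := Nat.div_mul_le_self τ b; omega), hcb,
    Pmat_mul_add (by omega) q (τ - b) i (c % b) (by rw [hab]; exact Nat.mod_lt c hb)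
      (by rw [hab]; omega)]
  by_cases h : i = c % b
  · rw [if_pos ⟨h, h ▸ hi⟩, if_pos h, Nat.cast_one]
  · rw [if_neg (fun h' => h h'.1), if_neg h, Nat.cast_zero]

lemma det_Hmat_bottom_ne_zero (hC : allMinorsInvertible C a (τ + 1 - a)) {c : ℕ} (hac : a ≤ c)
    (hcτ : c + a ≤ τ + 1) :
    (Matrix.of fun i j : Fin a => Hmat a b τ α C ((b - a) + i.val) (c + j.val)).det ≠ 0 := by
  have hentry : (Matrix.of fun i j : Fin a => Hmat a b τ α C ((b - a) + i.val) (c + j.val)) =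
      Matrix.of fun i j : Fin a => C i.val (c - a + j.val) := by
    ext i j
    rw [Matrix.of_apply, Matrix.of_apply, Hmat_of_le_of_le (by omega) (by omega) (by omega)]
    congr 1 <;> omega
  rw [hentry]
  exact hC a (fun i => i.val) (fun j => c - a + j.val) Fin.val_injective
    (fun j j' h => Fin.ext (by simpa using h)) (fun i => i.isLt) (fun j => by omega)

end Hmat

lemma Nat.sub_add_mod_of_le {b θ k : ℕ} (hθk : θ ≤ k) (hk : k < b) : (b - θ + k) % b = k - θ := by
  rw [show b - θ + k = k - θ + b by omega, Nat.add_mod_right, Nat.mod_eq_of_lt (by omega)]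

lemma Nat.mul_add_add_sub_add_mod {b x θ k : ℕ} (hθ : θ ≤ b) (hk : k < b) :
    (x * b + θ + (b - θ + k) % b) % b = k := by
  rw [Nat.add_mod_mod, show x * b + θ + (b - θ + k) = k + (x + 1) * b by rw [Nat.succ_mul]; omega,
    Nat.add_mul_mod_self_right, Nat.mod_eq_of_lt hk]

section Window

variable {K : Type*} [Field K] {a b τ : ℕ} {α : K} {C : ℕ → ℕ → K} {x θ : ℕ}

lemma Hmat_rotated_column {i k : ℕ} (hi : i < b - a) (hθ : θ < b) (hk : k < b) (hxb : b ≤ x * b)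
    (hτ : x * b + θ + b ≤ τ / b * b) :
    Hmat a b τ α C i (x * b + θ + (b - θ + k) % b) = if i = k then 1 else 0 := by
  rw [Hmat_eq_ite_mod hi (by omega) (by have := Nat.mod_lt (b - θ + k) (by omega : 0 < b); omega),
    Nat.mul_add_add_sub_add_mod hθ.le hk]

lemma det_Hmat_window_eq_pm_mul (hθ : θ < b - a) (hxb : b ≤ x * b)
    (hτ : x * b + θ + b ≤ τ / b * b) :
    ∃ ε : K, (ε = 1 ∨ ε = -1) ∧
      (Matrix.of fun i j : Fin b => Hmat a b τ α C i.val (x * b + θ + j.val)).det =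
        ε * (Matrix.of fun i j : Fin a =>
              Hmat a b τ α C ((b - a) + i.val) (x * b + (b - a) + j.val)).det := by
  have : NeZero b := ⟨by omega⟩
  let e : Fin (b - a) ⊕ Fin a ≃ Fin b := finSumFinEquiv.trans (finCongr (by omega))
  have he₁ : ∀ i, ((e (.inl i) : Fin b) : ℕ) = i := fun _ => rfl
  have he₂ : ∀ j, ((e (.inr j) : Fin b) : ℕ) = b - a + j := fun _ => rfl
  let σ : Equiv.Perm (Fin b) := Equiv.subRight ⟨θ, by omega⟩
  have hσ : ∀ k : Fin b, ((σ k : Fin b) : ℕ) = (b - θ + k) % b := fun k => Fin.val_sub _ _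
  set N := (Matrix.of fun i j : Fin b => Hmat a b τ α C i.val (x * b + θ + j.val)).submatrix e
    (e.trans σ)
  have h₁₁ : N.toBlocks₁₁ = 1 := by
    ext i j
    change Hmat a b τ α C (e (.inl i)) (x * b + θ + σ (e (.inl j))) = _
    rw [hσ, Hmat_rotated_column (by rw [he₁]; exact i.isLt) (by omega) (Fin.isLt _) hxb hτ, he₁,
      he₁, Matrix.one_apply]
    exact if_congr Fin.val_inj rfl rfl
  have h₁₂ : N.toBlocks₁₂ = 0 := by
    ext i j
    change Hmat a b τ α C (e (.inl i)) (x * b + θ + σ (e (.inr j))) = _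
    rw [hσ, Hmat_rotated_column (by rw [he₁]; exact i.isLt) (by omega) (Fin.isLt _) hxb hτ, he₁,
      he₂, if_neg (by omega), Matrix.zero_apply]
  have h₂₂ : N.toBlocks₂₂ = Matrix.of fun i j : Fin a =>
      Hmat a b τ α C ((b - a) + i.val) (x * b + (b - a) + j.val) := by
    ext i j
    change Hmat a b τ α C (e (.inr i)) (x * b + θ + σ (e (.inr j))) = _
    rw [hσ, he₂, he₂, Nat.sub_add_mod_of_le (by omega) (by omega),
      show x * b + θ + (b - a + j - θ) = x * b + (b - a) + j by omega]
    rfl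
  obtain ⟨ε, hε, hdet⟩ := Matrix.exists_det_eq_pm_mul_det_submatrix
    (Matrix.of fun i j : Fin b => Hmat a b τ α C i.val (x * b + θ + j.val)) e (e.trans σ)
  rw [Matrix.det_eq_det_toBlocks₂₂ N h₁₁ h₁₂, h₂₂] at hdet
  exact ⟨ε, hε, hdet⟩

end Window

theorem property_B2_case_i_small_theta_general {K : Type*} [Field K] (a b τ : ℕ)
    (α : K)
    (C : ℕ → ℕ → K)
    (hC : allMinorsInvertible C a (τ + 1 - a))
    (v ℓ : ℕ) (hτ : τ = v * b + ℓ)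
    (t x θ : ℕ) (ht1 : b - a ≤ t) (ht2 : t ≤ (v - 1) * b)
    (htxθ : t = x * b + θ) (hθ : θ < b - a) :
    (∃ ε : K, (ε = 1 ∨ ε = -1) ∧
      (Matrix.of fun i j : Fin b => Hmat a b τ α C i.val (t + j.val)).det =
        ε * (Matrix.of fun i j : Fin a =>
              Hmat a b τ α C ((b - a) + i.val) (x * b + (b - a) + j.val)).det) ∧
    (Matrix.of fun i j : Fin b => Hmat a b τ α C i.val (t + j.val)).det ≠ 0 := by
  subst htxθ
  have hxb : b ≤ x * b := Nat.le_mul_of_pos_left b (Nat.pos_of_ne_zero (by rintro rfl; omega))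
  have hwindow : x * b + θ + b ≤ v * b := by rw [Nat.sub_one_mul] at ht2; omega
  have hvτ : v * b ≤ τ / b * b :=
    Nat.mul_le_mul_right b ((Nat.le_div_iff_mul_le (by omega)).2 (by omega))
  obtain ⟨ε, hε, hdet⟩ := det_Hmat_window_eq_pm_mul (α := α) (C := C) hθ hxb (hwindow.trans hvτ)
  refine ⟨⟨ε, hε, hdet⟩, ?_⟩
  rw [hdet]
  exact mul_ne_zero (by rcases hε with rfl | rfl <;> norm_num)
    (det_Hmat_bottom_ne_zero hC (by omega) (by omega))

/-- case i, `θ ≤ δ-1`: write `τ = v·b + ℓ`, `0 ≤ ℓ < b`, and let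
`δ ≤ t ≤ (v-1)·b` with `t = x·b + θ`, `0 ≤ θ < b`.  If `θ ≤ δ-1` then
`det H([0:b-1],[t:t+b-1]) = ε · det H([δ:b-1],[x·b+δ : (x+1)·b-1])` for some `ε ∈ {1,-1}`;
in particular `H([0:b-1],[t:t+b-1])` is invertible over `K`. -/
theorem property_B2_case_i_small_theta {K : Type*} [Field K] (F : Subfield K) (a b τ : ℕ)
    (ha : 0 < a) (hab : a < b) (hbτ : b ≤ τ)
    (α : K) (hα : α ∉ F)
    (C : ℕ → ℕ → K) (hCF : ∀ i j, i < a → j < τ + 1 - a → C i j ∈ F)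
    (hC : allMinorsInvertible C a (τ + 1 - a))
    (v ℓ : ℕ) (hτ : τ = v * b + ℓ) (hℓ : ℓ < b)
    (t x θ : ℕ) (ht1 : b - a ≤ t) (ht2 : t ≤ (v - 1) * b)
    (htxθ : t = x * b + θ) (hθb : θ < b) (hθ : θ < b - a) :
    (∃ ε : K, (ε = 1 ∨ ε = -1) ∧
      (Matrix.of fun i j : Fin b => Hmat a b τ α C i.val (t + j.val)).det =
        ε * (Matrix.of fun i j : Fin a =>
              Hmat a b τ α C ((b - a) + i.val) (x * b + (b - a) + j.val)).det) ∧
    (Matrix.of fun i j : Fin b => Hmat a b τ α C i.val (t + j.val)).det ≠ 0 :=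
  property_B2_case_i_small_theta_general a b τ α C hC v ℓ hτ t x θ ht1 ht2 htxθ hθ
end

section
/- There exist ε ∈ {1, −1} and z ∈ F such that det(H([0:b−1],[τ−a : τ+δ−1])) = ε·α·det(H([δ:b−1],[τ−a : τ−1])) + z; consequently, since every a×a submatrix of H([δ:b−1],[0:τ]) is invertible and α ∉ F, the b×b submatrix H([0:b−1],[τ−a : τ+δ−1]) is invertible over K. -/
set_option linter.unusedVariables false

/-!
In the window `H([0:b-1],[τ-a : τ+δ-1])` every entry lies in `F` except `H(0,τ) = α`, so
Laplace expansion along row `0` gives `det = ±α·m + z` with `z ∈ F`, where `m` is the cofactor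
of that entry. In the cofactor, rows `1, …, δ-1` are unit vectors supported on the columns
`τ+1, …, τ+δ-1`, which vanish on the rows `δ, …, b-1`; hence
`m = ±det H([δ:b-1],[τ-a : τ-1])`. That `a×a` matrix is a window of consecutive columns of
`[I_a | C]`; discarding its unit columns leaves a square submatrix of `C`, so its determinant
is a nonzero element of `F`, and `α ∉ F` forbids `±α·m + z = 0`.
-/

section

open Matrix

section Determinant

variable {R : Type*} [CommRing R] {S : Type*} [SetLike S R] [SubringClass S R]

theorem Matrix.det_mem_of_forall_mem {n : Type*} [DecidableEq n] [Fintype n] (s : S)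
    (M : Matrix n n R) (hM : ∀ i j, M i j ∈ s) : M.det ∈ s := by
  have hlift : M = (SubringClass.subtype s).mapMatrix (of fun i j => ⟨M i j, hM i j⟩) := by
    ext; rfl
  rw [hlift, ← RingHom.map_det]
  exact SetLike.coe_mem _

theorem Matrix.exists_det_eq_cofactor_add_of_mem {n : ℕ} (s : S)
    (M : Matrix (Fin (n + 1)) (Fin (n + 1)) R) (i j : Fin (n + 1))
    (hM : ∀ i' j', (i', j') ≠ (i, j) → M i' j' ∈ s) :
    ∃ z ∈ s, M.det =
      (-1) ^ (i + j : ℕ) * M i j * (M.submatrix i.succAbove j.succAbove).det + z := by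
  rw [det_succ_row M i, ← Finset.add_sum_erase _ _ (Finset.mem_univ j)]
  refine ⟨_, sum_mem fun j' hj' => ?_, rfl⟩
  have hrow : M i j' ∈ s := hM i j' (by simpa using Finset.ne_of_mem_erase hj')
  have hminor : (M.submatrix i.succAbove j'.succAbove).det ∈ s :=
    det_mem_of_forall_mem s _ fun r c => hM _ _ (by simp [Fin.succAbove_ne])
  exact mul_mem (mul_mem (pow_mem (neg_mem (one_mem s)) _) hrow) hminor

theorem Matrix.exists_det_eq_sign_mul_of_submatrix {ι κ : Type*} [DecidableEq ι] [Fintype ι]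
    [DecidableEq κ] [Fintype κ] (M : Matrix ι ι R) (e e' : κ ≃ ι) :
    ∃ ε : R, (ε = 1 ∨ ε = -1) ∧ M.det = ε * (M.submatrix e e').det := by
  have hsign := det_reindex e.symm e'.symm M
  rw [reindex_apply, Equiv.symm_symm, Equiv.symm_symm] at hsign
  refine ⟨(Equiv.Perm.sign (e'.symm.trans e) : R), ?_, ?_⟩
  · rcases Int.units_eq_one_or (Equiv.Perm.sign (e'.symm.trans e)) with h | h <;> simp [h]
  · rw [hsign, ← mul_assoc, ← Int.cast_mul, ← Units.val_mul, Int.units_mul_self]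
    simp

theorem Matrix.exists_det_eq_sign_mul_of_identity_block {ι m n : Type*} [DecidableEq ι]
    [Fintype ι] [DecidableEq m] [Fintype m] [DecidableEq n] [Fintype n]
    (M : Matrix ι ι R) (e e' : m ⊕ n ≃ ι)
    (hone : ∀ i j, M (e (.inl i)) (e' (.inl j)) = (1 : Matrix m m R) i j)
    (hzero : ∀ i j, M (e (.inr i)) (e' (.inl j)) = 0) :
    ∃ ε : R, (ε = 1 ∨ ε = -1) ∧
      M.det = ε * (M.submatrix (e ∘ .inr) (e' ∘ .inr)).det := by
  obtain ⟨ε, hε, hdet⟩ := exists_det_eq_sign_mul_of_submatrix M e e'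
  have hblocks : M.submatrix e e' =
      fromBlocks 1 (M.submatrix (e ∘ .inl) (e' ∘ .inr))
        0 (M.submatrix (e ∘ .inr) (e' ∘ .inr)) := by
    ext (i | i) (j | j) <;> simp [hone, hzero]
  refine ⟨ε, hε, ?_⟩
  rw [hdet, hblocks, det_fromBlocks_zero₂₁, det_one, one_mul]

end Determinant

theorem Subfield.sign_mul_mul_add_ne_zero {K : Type*} [Field K] (F : Subfield K) {ε α x z : K}
    (hε : ε = 1 ∨ ε = -1) (hα : α ∉ F) (hx : x ∈ F) (hx0 : x ≠ 0) (hz : z ∈ F) :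
    ε * α * x + z ≠ 0 := by
  intro h
  have hε0 : ε ≠ 0 := by rcases hε with rfl | rfl <;> simp
  have hεF : ε ∈ F := by rcases hε with rfl | rfl <;> simp [F.one_mem, F.neg_mem]
  apply hα
  have hαeq : α = -z / (ε * x) := by
    field_simp
    linear_combination h
  rw [hαeq]
  exact F.div_mem (F.neg_mem hz) (F.mul_mem hεF hx)

section FinIndex

theorem Fin.val_succAbove_mk {k a : ℕ} (ha : a < k + 1) (j : Fin k) :
    ((⟨a, ha⟩ : Fin (k + 1)).succAbove j : ℕ) =
      if (j : ℕ) < a then (j : ℕ) else (j : ℕ) + 1 := by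
  unfold Fin.succAbove
  split_ifs <;> simp_all [Fin.lt_def]

variable {m n k : ℕ}

def finSumFinEquivOfAdd (h : m + n = k) : Fin m ⊕ Fin n ≃ Fin k :=
  finSumFinEquiv.trans (finCongr h)

def finSumFinEquivOfAddSwap (h : n + m = k) : Fin m ⊕ Fin n ≃ Fin k :=
  (Equiv.sumComm _ _).trans (finSumFinEquivOfAdd h)

@[simp]
theorem val_finSumFinEquivOfAdd_inl (h : m + n = k) (i : Fin m) :
    (finSumFinEquivOfAdd h (.inl i) : ℕ) = i := by
  simp [finSumFinEquivOfAdd]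

@[simp]
theorem val_finSumFinEquivOfAdd_inr (h : m + n = k) (i : Fin n) :
    (finSumFinEquivOfAdd h (.inr i) : ℕ) = m + i := by
  simp [finSumFinEquivOfAdd]

@[simp]
theorem val_finSumFinEquivOfAddSwap_inl (h : n + m = k) (i : Fin m) :
    (finSumFinEquivOfAddSwap h (.inl i) : ℕ) = n + i := by
  simp [finSumFinEquivOfAddSwap]

@[simp]
theorem val_finSumFinEquivOfAddSwap_inr (h : n + m = k) (i : Fin n) :
    (finSumFinEquivOfAddSwap h (.inr i) : ℕ) = i := by
  simp [finSumFinEquivOfAddSwap]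

end FinIndex

def withIdentity {K : Type*} [Field K] (a : ℕ) (C : ℕ → ℕ → K) (i j : ℕ) : K :=
  if j < a then (if i = j then 1 else 0) else C i (j - a)

theorem det_withIdentity_window_ne_zero {K : Type*} [Field K] {a n : ℕ} {C : ℕ → ℕ → K}
    (hC : allMinorsInvertible C a n) {t : ℕ} (ht : t ≤ n) :
    (of fun i j : Fin a => withIdentity a C i (t + j)).det ≠ 0 := by
  obtain ⟨s, hs⟩ : ∃ s, s = a - t := ⟨_, rfl⟩
  have hrows : (a - s) + s = a := by omega
  have hcols : s + (a - s) = a := by omega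
  obtain ⟨ε, hε, hdet⟩ := exists_det_eq_sign_mul_of_identity_block
    (of fun i j : Fin a => withIdentity a C i (t + j))
    (finSumFinEquivOfAddSwap hrows) (finSumFinEquivOfAdd hcols)
    (fun i j => by
      have := i.isLt; have := j.isLt
      simp only [of_apply, one_apply, Fin.ext_iff, withIdentity, val_finSumFinEquivOfAddSwap_inl,
        val_finSumFinEquivOfAdd_inl]
      split_ifs <;> first | rfl | omega)
    (fun i j => by
      have := i.isLt; have := j.isLt
      simp only [of_apply, withIdentity, val_finSumFinEquivOfAddSwap_inr,
        val_finSumFinEquivOfAdd_inl]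
      split_ifs <;> first | rfl | omega)
  have hblock : (of fun i j : Fin a => withIdentity a C i (t + j)).submatrix
      (finSumFinEquivOfAddSwap hrows ∘ .inr) (finSumFinEquivOfAdd hcols ∘ .inr) =
      of fun i j : Fin (a - s) => C i (t + s + j - a) := by
    ext i j
    have := i.isLt
    simp only [Function.comp_apply, submatrix_apply, of_apply, withIdentity,
      val_finSumFinEquivOfAddSwap_inr, val_finSumFinEquivOfAdd_inr]
    rw [if_neg (by omega), add_assoc]
  rw [hdet, hblock]
  refine mul_ne_zero (by rcases hε with rfl | rfl <;> simp) (hC _ _ _ ?_ ?_ ?_ ?_)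
  · exact fun i j h => Fin.ext h
  · intro i j h; simp only at h; exact Fin.ext (by omega)
  · intro i; exact i.isLt.trans_le (by omega)
  · intro j; have := j.isLt; omega

section Hmat

variable {K : Type*} [Field K] {a b τ : ℕ} {α : K} {C : ℕ → ℕ → K}

theorem Hmat_mem (F : Subfield K) (hCF : ∀ i j, i < a → j < τ + 1 - a → C i j ∈ F)
    {i j : ℕ} (hi : i < b) (hj : b - a ≤ j) (hij : (i, j) ≠ (0, τ)) :
    Hmat a b τ α C i j ∈ F := by
  simp only [ne_eq, Prod.mk.injEq, not_and_or] at hij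
  unfold Hmat
  split_ifs <;> first
    | omega
    | exact F.zero_mem
    | exact F.one_mem
    | exact natCast_mem F _
    | exact hCF _ _ (by omega) (by omega)

theorem Hmat_zero_self (hab : a < b) (hbτ : b ≤ τ) : Hmat a b τ α C 0 τ = α := by
  unfold Hmat
  split_ifs <;> first | rfl | omega

theorem Hmat_succ_tail (hbτ : b ≤ τ) {i j : ℕ} (hi : i + 1 < b - a) :
    Hmat a b τ α C (i + 1) (τ + 1 + j) = if i = j then 1 else 0 := by
  unfold Hmat
  split_ifs <;> first | rfl | omega

theorem Hmat_bottom_tail (hbτ : b ≤ τ) (i : ℕ) {j : ℕ} (hj : j + 1 < b - a) :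
    Hmat a b τ α C (b - a + i) (τ + 1 + j) = 0 := by
  unfold Hmat
  split_ifs <;> first | rfl | omega

theorem Hmat_bottom_eq_withIdentity (i : ℕ) {j : ℕ} (hj : j ≤ τ) :
    Hmat a b τ α C (b - a + i) j = withIdentity a C i j := by
  unfold Hmat withIdentity
  split_ifs <;> first | rfl | omega | rw [Nat.add_sub_cancel_left]

end Hmat

section HmatWindow

variable {K : Type*} [Field K] {a b τ : ℕ} {α : K} {C : ℕ → ℕ → K}

theorem exists_det_Hmat_window_cofactor_eq {k : ℕ} (hab : a < k + 1) (hbτ : k + 1 ≤ τ) :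
    ∃ ε : K, (ε = 1 ∨ ε = -1) ∧
      ((of fun i j : Fin (k + 1) => Hmat a (k + 1) τ α C i (τ - a + j)).submatrix
          (Fin.succAbove 0) (Fin.succAbove ⟨a, hab⟩)).det =
        ε * (of fun i j : Fin a => Hmat a (k + 1) τ α C (k + 1 - a + i) (τ - a + j)).det := by
  have hrows : (k + 1 - a - 1) + a = k := by omega
  have hcols : a + (k + 1 - a - 1) = k := by omega
  have hA : ((of fun i j : Fin (k + 1) => Hmat a (k + 1) τ α C i (τ - a + j)).submatrix
      (Fin.succAbove 0) (Fin.succAbove ⟨a, hab⟩)).submatrix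
      (finSumFinEquivOfAdd hrows ∘ .inr) (finSumFinEquivOfAddSwap hcols ∘ .inr) =
      of fun i j : Fin a => Hmat a (k + 1) τ α C (k + 1 - a + i) (τ - a + j) := by
    ext i j
    simp only [Function.comp_apply, submatrix_apply, of_apply, Fin.succAbove_zero,
      Fin.val_succ, Fin.val_succAbove_mk, val_finSumFinEquivOfAdd_inr,
      val_finSumFinEquivOfAddSwap_inr]
    rw [if_pos j.isLt, show k + 1 - a - 1 + i + 1 = k + 1 - a + i by omega]
  rw [← hA]
  refine exists_det_eq_sign_mul_of_identity_block _ _ _ (fun i j => ?_) (fun i j => ?_)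
  · have := i.isLt
    simp only [submatrix_apply, of_apply, one_apply, Fin.ext_iff, Fin.succAbove_zero,
      Fin.val_succ, Fin.val_succAbove_mk, val_finSumFinEquivOfAdd_inl,
      val_finSumFinEquivOfAddSwap_inl]
    rw [if_neg (by omega), show τ - a + (a + j + 1) = τ + 1 + j by omega,
      Hmat_succ_tail hbτ (by omega)]
  · have := j.isLt
    simp only [submatrix_apply, of_apply, Fin.succAbove_zero, Fin.val_succ,
      Fin.val_succAbove_mk, val_finSumFinEquivOfAdd_inr, val_finSumFinEquivOfAddSwap_inl]
    rw [if_neg (by omega), show τ - a + (a + j + 1) = τ + 1 + j by omega,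
      show k + 1 - a - 1 + i + 1 = k + 1 - a + i by omega, Hmat_bottom_tail hbτ _ (by omega)]

theorem exists_det_Hmat_window_eq (F : Subfield K) (hab : a < b) (hbτ : b ≤ τ)
    (hCF : ∀ i j, i < a → j < τ + 1 - a → C i j ∈ F) :
    ∃ ε z : K, (ε = 1 ∨ ε = -1) ∧ z ∈ F ∧
      (of fun i j : Fin b => Hmat a b τ α C i (τ - a + j)).det =
        ε * α * (of fun i j : Fin a => Hmat a b τ α C (b - a + i) (τ - a + j)).det + z := by
  obtain ⟨k, rfl⟩ : ∃ k, b = k + 1 := ⟨b - 1, by omega⟩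
  obtain ⟨z, hz, hexp⟩ := exists_det_eq_cofactor_add_of_mem F
    (of fun i j : Fin (k + 1) => Hmat a (k + 1) τ α C i (τ - a + j)) 0 ⟨a, hab⟩
    fun i j hij => Hmat_mem F hCF i.isLt (by omega) (by
      contrapose! hij
      simp only [Prod.mk.injEq, Fin.ext_iff, Fin.val_zero] at hij ⊢
      omega)
  obtain ⟨ε, hε, hcofactor⟩ := exists_det_Hmat_window_cofactor_eq (α := α) (C := C) hab hbτ
  refine ⟨(-1) ^ a * ε, z, ?_, hz, ?_⟩
  · rcases neg_one_pow_eq_or K a with h | h <;> rcases hε with rfl | rfl <;> simp [h]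
  · rw [hexp, hcofactor]
    simp only [of_apply, Fin.val_zero, zero_add, Nat.sub_add_cancel (hab.le.trans hbτ)]
    rw [Hmat_zero_self hab hbτ]
    ring

theorem det_Hmat_bottom_window_mem (F : Subfield K) (hab : a < b) (hbτ : b ≤ τ)
    (hCF : ∀ i j, i < a → j < τ + 1 - a → C i j ∈ F) :
    (of fun i j : Fin a => Hmat a b τ α C (b - a + i) (τ - a + j)).det ∈ F :=
  det_mem_of_forall_mem F _ fun i j =>
    Hmat_mem F hCF (by omega) (by omega) (by simp only [ne_eq, Prod.mk.injEq]; omega)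

theorem det_Hmat_bottom_window_ne_zero (hab : a < b) (hbτ : b ≤ τ)
    (hC : allMinorsInvertible C a (τ + 1 - a)) :
    (of fun i j : Fin a => Hmat a b τ α C (b - a + i) (τ - a + j)).det ≠ 0 := by
  have hwindow : (of fun i j : Fin a => Hmat a b τ α C (b - a + i) (τ - a + j)) =
      of fun i j : Fin a => withIdentity a C i (τ - a + j) := by
    ext i j
    exact Hmat_bottom_eq_withIdentity _ (by omega)
  rw [hwindow]
  exact det_withIdentity_window_ne_zero hC (by omega)

end HmatWindow

end

theorem property_B2_case_iv_general {K : Type*} [Field K] (F : Subfield K) (a b τ : ℕ)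
    (hab : a < b) (hbτ : b ≤ τ)
    (α : K) (hα : α ∉ F)
    (C : ℕ → ℕ → K) (hCF : ∀ i j, i < a → j < τ + 1 - a → C i j ∈ F)
    (hC : allMinorsInvertible C a (τ + 1 - a)) :
    (∃ ε z : K, (ε = 1 ∨ ε = -1) ∧ z ∈ F ∧
      (Matrix.of fun i j : Fin b => Hmat a b τ α C i.val (τ - a + j.val)).det =
        ε * α * (Matrix.of fun i j : Fin a =>
              Hmat a b τ α C ((b - a) + i.val) (τ - a + j.val)).det + z) ∧
    (Matrix.of fun i j : Fin b => Hmat a b τ α C i.val (τ - a + j.val)).det ≠ 0 := by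
  obtain ⟨ε, z, hε, hz, hdet⟩ := exists_det_Hmat_window_eq (α := α) F hab hbτ hCF
  refine ⟨⟨ε, z, hε, hz, hdet⟩, ?_⟩
  rw [hdet]
  exact F.sign_mul_mul_add_ne_zero hε hα (det_Hmat_bottom_window_mem F hab hbτ hCF)
    (det_Hmat_bottom_window_ne_zero hab hbτ hC) hz

/-- case iv, `t = τ - a`: there exist `ε ∈ {1,-1}` and `z ∈ F` with
`det H([0:b-1],[τ-a : τ+δ-1]) = ε·α·det H([δ:b-1],[τ-a : τ-1]) + z`; consequently the
`b×b` submatrix `H([0:b-1],[τ-a : τ+δ-1])` is invertible over `K`. -/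
theorem property_B2_case_iv {K : Type*} [Field K] (F : Subfield K) (a b τ : ℕ)
    (ha : 0 < a) (hab : a < b) (hbτ : b ≤ τ)
    (α : K) (hα : α ∉ F)
    (C : ℕ → ℕ → K) (hCF : ∀ i j, i < a → j < τ + 1 - a → C i j ∈ F)
    (hC : allMinorsInvertible C a (τ + 1 - a)) :
    (∃ ε z : K, (ε = 1 ∨ ε = -1) ∧ z ∈ F ∧
      (Matrix.of fun i j : Fin b => Hmat a b τ α C i.val (τ - a + j.val)).det =
        ε * α * (Matrix.of fun i j : Fin a =>
              Hmat a b τ α C ((b - a) + i.val) (τ - a + j.val)).det + z) ∧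
    (Matrix.of fun i j : Fin b => Hmat a b τ α C i.val (τ - a + j.val)).det ≠ 0 :=
  property_B2_case_iv_general F a b τ hab hbτ α hα C hCF hC
end

section
/- Let F be a field, a a positive integer, m a nonnegative integer, and C an a×m matrix over F every square submatrix of which is invertible. Then every set of a columns of the a×(a+m) block matrix [I_a | C] is linearly independent over F; equivalently, [I_a | C] is the parity-check matrix of an [a+m, m] MDS code. -/
/-!
Suppose the chosen columns of `[I_a | C]` satisfy a linear relation, with `L` the identity
columns and `R` the columns of `C` among them. In the rows outside `L` the identity columns
vanish, so the coefficients on `R` lie in the kernel of `C(Lᶜ, R)`; this submatrix is square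
because `|L| + |R| = a`, hence invertible, so those coefficients vanish. The remaining relation
involves only distinct unit vectors.
-/

open Finset

namespace Matrix

variable {F ι κ : Type*} [Field F]

def Superregular (C : Matrix ι κ F) : Prop :=
  ∀ (k : ℕ) (I : Fin k → ι) (J : Fin k → κ),
    Function.Injective I → Function.Injective J → (C.submatrix I J).det ≠ 0

theorem Superregular.eq_zero_of_sum_mul_eq_zero {C : Matrix ι κ F} (hC : C.Superregular)
    {I : Finset ι} {J : Finset κ} (hIJ : #I = #J) {v : κ → F}
    (hv : ∀ i ∈ I, ∑ j ∈ J, C i j * v j = 0) : ∀ j ∈ J, v j = 0 := by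
  let eI : Fin #J ≃ I := (I.equivFinOfCardEq hIJ).symm
  let eJ : Fin #J ≃ J := J.equivFin.symm
  have hker :
      C.submatrix (fun p => (eI p : ι)) (fun q => (eJ q : κ)) *ᵥ (fun q => v (eJ q)) = 0 := by
    funext p
    rw [Pi.zero_apply, ← hv _ (eI p).2, ← sum_coe_sort J]
    exact eJ.sum_comp fun j : J => C (eI p) j * v j
  have hzero := eq_zero_of_mulVec_eq_zero
    (hC _ _ _ (Subtype.val_injective.comp eI.injective) (Subtype.val_injective.comp eJ.injective))
    hker
  intro j hj
  simpa [eJ] using congrFun hzero (eJ.symm ⟨j, hj⟩)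

end Matrix

theorem identity_append_superregular_is_MDS_general {F : Type*} [Field F] (a m : ℕ)
    (C : Matrix (Fin a) (Fin m) F)
    (hC : ∀ (k : ℕ) (I : Fin k → Fin a) (J : Fin k → Fin m),
      Function.Injective I → Function.Injective J → (C.submatrix I J).det ≠ 0) :
    ∀ s : Finset (Fin a ⊕ Fin m), s.card = a →
      LinearIndependent F (fun j : {x // x ∈ s} =>
        fun i : Fin a => Matrix.fromCols (1 : Matrix (Fin a) (Fin a) F) C i j.val) := by
  intro s hs
  change LinearIndepOn F (fun j i => Matrix.fromCols (1 : Matrix (Fin a) (Fin a) F) C i j)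
    (s : Set _)
  rw [linearIndepOn_finset_iff]
  intro g hg
  have hrow (i : Fin a) :
      (if i ∈ s.toLeft then g (.inl i) else 0) + ∑ y ∈ s.toRight, C i y * g (.inr y) = 0 := by
    have := congrFun hg i
    rw [← toLeft_disjSum_toRight (u := s), sum_disjSum] at this
    simpa [Matrix.one_apply, mul_comm] using this
  have hR : ∀ y ∈ s.toRight, g (.inr y) = 0 := by
    refine Matrix.Superregular.eq_zero_of_sum_mul_eq_zero hC (I := s.toLeftᶜ) ?_ fun i hi => ?_
    · have := s.card_toLeft_add_card_toRight
      rw [card_compl, Fintype.card_fin]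
      omega
    · simpa [mem_compl.mp hi] using hrow i
  have hL : ∀ x ∈ s.toLeft, g (.inl x) = 0 := fun x hx => by
    have hCpart : ∑ y ∈ s.toRight, C x y * g (.inr y) = 0 :=
      sum_eq_zero fun y hy => by rw [hR y hy, mul_zero]
    simpa [hx, hCpart] using hrow x
  rintro (x | y) hx
  · exact hL x (mem_toLeft.2 hx)
  · exact hR y (mem_toRight.2 hx)

/-- let `F` be a field, `a > 0`, `m ≥ 0`, and `C` an `a×m` matrix over `F`
every square submatrix of which is invertible.  Then every set of `a` columns of the
`a×(a+m)` block matrix `[I_a | C]` is linearly independent over `F` (i.e. `[I_a | C]` is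
the parity-check matrix of an `[a+m, m]` MDS code). -/
theorem identity_append_superregular_is_MDS {F : Type*} [Field F] (a m : ℕ) (ha : 0 < a)
    (C : Matrix (Fin a) (Fin m) F)
    (hC : ∀ (k : ℕ) (I : Fin k → Fin a) (J : Fin k → Fin m),
      Function.Injective I → Function.Injective J → (C.submatrix I J).det ≠ 0) :
    ∀ s : Finset (Fin a ⊕ Fin m), s.card = a →
      LinearIndependent F (fun j : {x // x ∈ s} =>
        fun i : Fin a => Matrix.fromCols (1 : Matrix (Fin a) (Fin a) F) C i j.val) :=
  identity_append_superregular_is_MDS_general a m C hC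
end

section
/- For every prime power q and all integers a, τ with 1 ≤ a ≤ τ ≤ q, there exists an a×(τ+1−a) matrix C over the finite field F_q with q elements such that every square submatrix of C is invertible. -/
/-!
Take distinct nodes `x₁, …, x_a` and `y₁, …, y_{m-1}` in `F` (there are `τ ≤ q` of them) and the
point at infinity `y_m = ∞`, and let `C` be the Cauchy matrix `(x_i - y_j)⁻¹`, with a column of
ones at `∞`. A square submatrix is again of this form. If it killed a vector `v`, then
`P = ∑ⱼ vⱼ ∏_{l ≠ j} (X - y_l)` (omitting the factor for `∞`) would have degree `< k` and vanish
at the `k` nodes `xᵢ`, so `P = 0`; evaluating `P` at a finite `y_j` isolates `vⱼ`, and once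
these vanish, `P = v_∞ ∏_{l ≠ ∞} (X - y_l)` forces `v_∞ = 0` too.
-/

open Polynomial Finset Function

namespace Matrix

variable {F : Type*} [Field F] {m n : Type*}

/-- The Cauchy matrix `(x i - y j)⁻¹` with nodes `y j` on the projective line `Option F`;
the point at infinity `none` gives a column of ones. -/
noncomputable def extCauchy (x : m → F) (y : n → Option F) : Matrix m n F :=
  of fun i j => (y j).elim 1 fun w => (x i - w)⁻¹

lemma submatrix_extCauchy {k l : Type*} (x : m → F) (y : n → Option F) (I : k → m)
    (J : l → n) : (extCauchy x y).submatrix I J = extCauchy (x ∘ I) (y ∘ J) :=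
  rfl

noncomputable def cauchyFactor : Option F → F[X] :=
  fun y => y.elim 1 fun w => X - C w

lemma cauchyFactor_ne_zero (y : Option F) : cauchyFactor y ≠ 0 := by
  cases y <;> simp [cauchyFactor, X_sub_C_ne_zero]

lemma natDegree_cauchyFactor_le (y : Option F) : (cauchyFactor y).natDegree ≤ 1 := by
  cases y <;> simp [cauchyFactor]

lemma eval_cauchyFactor_eq_zero_iff {x : F} {y : Option F} :
    (cauchyFactor y).eval x = 0 ↔ y = some x := by
  cases y <;> simp [cauchyFactor, sub_eq_zero, eq_comm]

lemma extCauchy_mul_eval_cauchyFactor {x : m → F} {y : n → Option F} {i : m} {j : n}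
    (h : y j ≠ some (x i)) : extCauchy x y i j * (cauchyFactor (y j)).eval (x i) = 1 := by
  have hne : (cauchyFactor (y j)).eval (x i) ≠ 0 := mt eval_cauchyFactor_eq_zero_iff.1 h
  cases hy : y j with
  | none => simp [extCauchy, cauchyFactor, hy]
  | some w =>
    rw [hy] at hne
    simpa [extCauchy, cauchyFactor, hy] using inv_mul_cancel₀ hne

section Cofactor

variable [Fintype n] [DecidableEq n]

noncomputable def cauchyCofactor (y : n → Option F) (j : n) : F[X] :=
  ∏ l ∈ univ.erase j, cauchyFactor (y l)

lemma cauchyCofactor_ne_zero (y : n → Option F) (j : n) : cauchyCofactor y j ≠ 0 :=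
  prod_ne_zero_iff.2 fun l _ => cauchyFactor_ne_zero (y l)

lemma natDegree_cauchyCofactor_le (y : n → Option F) (j : n) :
    (cauchyCofactor y j).natDegree ≤ Fintype.card n - 1 := by
  calc (cauchyCofactor y j).natDegree
      ≤ ∑ l ∈ univ.erase j, (cauchyFactor (y l)).natDegree := natDegree_prod_le _ _
    _ ≤ ∑ _l ∈ univ.erase j, 1 := sum_le_sum fun l _ => natDegree_cauchyFactor_le (y l)
    _ = Fintype.card n - 1 := by simp [card_erase_of_mem (mem_univ j)]

lemma eval_cauchyCofactor_eq_zero_iff {y : n → Option F} (hy : Injective y) {j j' : n} {w : F}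
    (hj : y j = some w) : (cauchyCofactor y j').eval w = 0 ↔ j ≠ j' := by
  simp only [cauchyCofactor, eval_prod, prod_eq_zero_iff, mem_erase, mem_univ, and_true,
    eval_cauchyFactor_eq_zero_iff, ← hj, hy.eq_iff, exists_eq_right]

lemma eval_sum_cauchyCofactor {x : m → F} {y : n → Option F} (hxy : ∀ i j, y j ≠ some (x i))
    (v : n → F) (i : m) :
    (∑ j, C (v j) * cauchyCofactor y j).eval (x i) =
      (extCauchy x y *ᵥ v) i * (∏ l, cauchyFactor (y l)).eval (x i) := by
  simp only [eval_finsetSum, eval_mul, eval_C, mulVec, dotProduct, sum_mul]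
  refine sum_congr rfl fun j _ => ?_
  rw [← mul_prod_erase univ _ (mem_univ j), eval_mul, ← cauchyCofactor]
  linear_combination (-v j * (cauchyCofactor y j).eval (x i)) *
    extCauchy_mul_eval_cauchyFactor (hxy i j)

lemma eval_sum_cauchyCofactor_of_eq_some {y : n → Option F} (hy : Injective y) (v : n → F)
    {j : n} {w : F} (hj : y j = some w) :
    (∑ j', C (v j') * cauchyCofactor y j').eval w = v j * (cauchyCofactor y j).eval w := by
  rw [eval_finsetSum, sum_eq_single j (fun j' _ hj' => ?_) (by simp)]
  · simp
  · simp [(eval_cauchyCofactor_eq_zero_iff hy hj).2 hj'.symm]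

lemma eq_zero_of_sum_cauchyCofactor_eq_zero {y : n → Option F} (hy : Injective y) {v : n → F}
    (h : ∑ j, C (v j) * cauchyCofactor y j = 0) : v = 0 := by
  have hfinite : ∀ j w, y j = some w → v j = 0 := by
    intro j w hj
    have hsum := eval_sum_cauchyCofactor_of_eq_some hy v hj
    rw [h, eval_zero, eq_comm, mul_eq_zero] at hsum
    exact hsum.resolve_right (mt (eval_cauchyCofactor_eq_zero_iff hy hj).1 (not_not.2 rfl))
  funext j
  cases hj : y j with
  | some w => exact hfinite j w hj
  | none =>
    rw [sum_eq_single j (fun j' _ hj' => ?_) (by simp)] at h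
    · simpa [cauchyCofactor_ne_zero] using h
    · obtain ⟨w, hw⟩ := Option.ne_none_iff_exists'.1 fun h' => hj' (hy (h'.trans hj.symm))
      simp [hfinite j' w hw]

theorem det_extCauchy_ne_zero {x : n → F} {y : n → Option F} (hx : Injective x)
    (hy : Injective y) (hxy : ∀ i j, y j ≠ some (x i)) : (extCauchy x y).det ≠ 0 := by
  intro hdet
  obtain ⟨v, hv, hMv⟩ := exists_mulVec_eq_zero_iff.2 hdet
  obtain ⟨j₀, -⟩ := Function.ne_iff.1 hv
  refine hv (eq_zero_of_sum_cauchyCofactor_eq_zero hy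
    (eq_zero_of_natDegree_lt_card_of_eval_eq_zero _ hx (fun i => ?_) ?_))
  · rw [eval_sum_cauchyCofactor hxy, hMv, Pi.zero_apply, zero_mul]
  · have hdeg := natDegree_sum_le_of_forall_le univ (fun j => C (v j) * cauchyCofactor y j)
      fun j _ => natDegree_C_mul_le (v j) _ |>.trans (natDegree_cauchyCofactor_le y j)
    have := Fintype.card_pos_iff.2 ⟨j₀⟩
    omega

end Cofactor

theorem det_submatrix_extCauchy_ne_zero {x : m → F} {y : n → Option F} (hx : Injective x)
    (hy : Injective y) (hxy : ∀ i j, y j ≠ some (x i)) {k : ℕ} {I : Fin k → m} {J : Fin k → n}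
    (hI : Injective I) (hJ : Injective J) : ((extCauchy x y).submatrix I J).det ≠ 0 := by
  rw [submatrix_extCauchy]
  classical
  exact det_extCauchy_ne_zero (hx.comp hI) (hy.comp hJ) fun i j => hxy (I i) (J j)

end Matrix

lemma exists_cauchy_nodes {F : Type*} [Fintype F] {a c : ℕ} (h : a + c ≤ Fintype.card F) :
    ∃ (x : Fin a → F) (y : Fin (c + 1) → Option F),
      Injective x ∧ Injective y ∧ ∀ i j, y j ≠ some (x i) := by
  obtain ⟨e⟩ := Embedding.nonempty_of_card_le (α := Fin a ⊕ Fin c) (by simpa using h)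
  refine ⟨e ∘ Sum.inl, Option.map (e ∘ Sum.inr) ∘ finSuccEquiv c,
    e.injective.comp Sum.inl_injective,
    (Option.map_injective (e.injective.comp Sum.inr_injective)).comp (finSuccEquiv c).injective,
    fun i j hij => ?_⟩
  cases hj : finSuccEquiv c j with
  | none => simp [hj] at hij
  | some j' =>
    simp only [comp_apply, hj, Option.map_some, Option.some.injEq] at hij
    exact Sum.inr_ne_inl (e.injective hij)

theorem exists_superregular_matrix_general (q a τ : ℕ) (haτ : a ≤ τ) (hτq : τ ≤ q)
    (F : Type*) [Field F] [Fintype F] (hF : Fintype.card F = q) :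
    ∃ C : Matrix (Fin a) (Fin (τ + 1 - a)) F,
      ∀ (k : ℕ) (I : Fin k → Fin a) (J : Fin k → Fin (τ + 1 - a)),
        Function.Injective I → Function.Injective J → (C.submatrix I J).det ≠ 0 := by
  obtain ⟨x, y, hx, hy, hxy⟩ := exists_cauchy_nodes (F := F) (a := a) (c := τ - a) (by omega)
  rw [show τ + 1 - a = τ - a + 1 by omega]
  exact ⟨Matrix.extCauchy x y, fun _ _ _ hI hJ =>
    Matrix.det_submatrix_extCauchy_ne_zero hx hy hxy hI hJ⟩

/-- for every prime power `q` and all integers `a, τ` with `1 ≤ a ≤ τ ≤ q`,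
there exists an `a×(τ+1-a)` matrix `C` over the finite field with `q` elements such that
every square submatrix of `C` is invertible. -/
theorem exists_superregular_matrix (q a τ : ℕ) (hq : IsPrimePow q)
    (ha : 1 ≤ a) (haτ : a ≤ τ) (hτq : τ ≤ q)
    (F : Type*) [Field F] [Fintype F] (hF : Fintype.card F = q) :
    ∃ C : Matrix (Fin a) (Fin (τ + 1 - a)) F,
      ∀ (k : ℕ) (I : Fin k → Fin a) (J : Fin k → Fin (τ + 1 - a)),
        Function.Injective I → Function.Injective J → (C.submatrix I J).det ≠ 0 :=
  exists_superregular_matrix_general q a τ haτ hτq F hF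
end
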